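/- arXiv:2403.08803 — 9 statements merged into one kernel-verified Lean document; each statement's English description precedes it below -/
import Mathlib

section
/- For every point x = (x₁,…,x₅) ∈ ℝ⁵ satisfying p₁(x) = 0 and p₂(x) = 1, one has |p₃(x)| ≤ 3/√20; moreover both values 3/√20 and −3/√20 are attained by p₃ on the set {x ∈ ℝ⁵ : p₁(x) = 0, p₂(x) = 1}. -/
noncomputable section

/-- Power sum `p_k(x) = x₁^k + ⋯ + x₅^k` on `ℝ⁵`. -/
def p (k : ℕ) (x : Fin 5 → ℝ) : ℝ := ∑ i, x i ^ k

/-- The surface `A_C = {x ∈ ℝ⁵ : p₁(x) = 0, p₂(x) = 1, p₃(x) = C}`. -/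
def A (C : ℝ) : Set (Fin 5 → ℝ) := {x | p 1 x = 0 ∧ p 2 x = 1 ∧ p 3 x = C}

/-- The gradient of `p_k`: `∇p_k(x) = (k x₁^{k-1}, …, k x₅^{k-1})`. -/
def grad (k : ℕ) (x : Fin 5 → ℝ) : Fin 5 → ℝ := fun i => (k : ℝ) * x i ^ (k - 1)

/-- The set of coordinate permutations of a point `x₀ ∈ ℝ⁵`. -/
def perms (x₀ : Fin 5 → ℝ) : Set (Fin 5 → ℝ) := {x | ∃ σ : Equiv.Perm (Fin 5), x = x₀ ∘ σ}

lemma coord_bound (a b c d e : ℝ) (h1 : a + b + c + d + e = 0)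
    (h2 : a^2 + b^2 + c^2 + d^2 + e^2 = 1) : a^2 ≤ 4/5 := by
  have ha : a = -(b + c + d + e) := by linarith
  subst ha
  nlinarith [sq_nonneg (b - c), sq_nonneg (b - d), sq_nonneg (b - e),
    sq_nonneg (c - d), sq_nonneg (c - e), sq_nonneg (d - e)]

lemma cubic_bound (s a : ℝ) (hs : s^2 = 20) (hs0 : 0 < s) (ha : a^2 ≤ 4/5) :
    a^3 ≤ 2/s * a^2 + 7/s^2 * a + 4/s^3 := by
  have hle : a ≤ 4/s := by
    by_contra h
    push_neg at h
    have h4 : (0:ℝ) < 4/s := by positivity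
    have hsq : (4/s)^2 = 4/5 := by rw [div_pow, hs]; norm_num
    have hp : (0:ℝ) < (4/s) * (a - 4/s) := mul_pos h4 (by linarith)
    nlinarith [hp, hsq, sq_nonneg (a - 4/s)]
  have key : 0 ≤ (4/s - a) * (a + 1/s)^2 :=
    mul_nonneg (by linarith) (sq_nonneg _)
  have hs3 : s^3 = 20 * s := by nlinarith
  have h0 : s ≠ 0 := ne_of_gt hs0
  have expand : (4/s - a) * (a + 1/s)^2 =
      2/s * a^2 + 7/s^2 * a + 4/s^3 - a^3 := by
    field_simp
    ring
  linarith [expand ▸ key]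

lemma half (a b c d e : ℝ) (h1 : a + b + c + d + e = 0)
    (h2 : a^2 + b^2 + c^2 + d^2 + e^2 = 1) :
    a^3 + b^3 + c^3 + d^3 + e^3 ≤ 3 / Real.sqrt 20 := by
  set s := Real.sqrt 20 with hsdef
  have hs : s^2 = 20 := Real.sq_sqrt (by norm_num)
  have hs0 : 0 < s := Real.sqrt_pos.mpr (by norm_num)
  have ha := cubic_bound s a hs hs0 (coord_bound a b c d e h1 h2)
  have hb := cubic_bound s b hs hs0 (coord_bound b a c d e (by linarith) (by linarith))
  have hc := cubic_bound s c hs hs0 (coord_bound c a b d e (by linarith) (by linarith))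
  have hd := cubic_bound s d hs hs0 (coord_bound d a b c e (by linarith) (by linarith))
  have he := cubic_bound s e hs hs0 (coord_bound e a b c d (by linarith) (by linarith))
  have h0 : s ≠ 0 := ne_of_gt hs0
  have hsum : 2/s * (a^2+b^2+c^2+d^2+e^2) + 7/s^2 * (a+b+c+d+e) + 5 * (4/s^3)
      = 3 / s := by
    rw [h1, h2]
    field_simp
    nlinarith
  nlinarith [ha, hb, hc, hd, he]

/-- on the set `{p₁ = 0, p₂ = 1}` one has `|p₃| ≤ 3/√20`,
and both values `3/√20` and `-3/√20` are attained by `p₃` on this set. -/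
theorem stmt_0 :
    (∀ x : Fin 5 → ℝ, p 1 x = 0 → p 2 x = 1 → |p 3 x| ≤ 3 / Real.sqrt 20) ∧
    (∃ x : Fin 5 → ℝ, p 1 x = 0 ∧ p 2 x = 1 ∧ p 3 x = 3 / Real.sqrt 20) ∧
    (∃ x : Fin 5 → ℝ, p 1 x = 0 ∧ p 2 x = 1 ∧ p 3 x = -(3 / Real.sqrt 20)) := by
  have hs : (Real.sqrt 20)^2 = 20 := Real.sq_sqrt (by norm_num)
  have hs0 : 0 < Real.sqrt 20 := Real.sqrt_pos.mpr (by norm_num)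
  have h0 : Real.sqrt 20 ≠ 0 := ne_of_gt hs0
  refine ⟨?_, ?_, ?_⟩
  · intro x h1 h2
    simp only [p, Fin.sum_univ_five] at h1 h2 ⊢
    rw [abs_le]
    constructor
    · have := half (-(x 0)) (-(x 1)) (-(x 2)) (-(x 3)) (-(x 4))
        (by linarith) (by nlinarith)
      nlinarith [this]
    · exact half (x 0) (x 1) (x 2) (x 3) (x 4) (by linarith) (by nlinarith)
  · refine ⟨![-(1/Real.sqrt 20), -(1/Real.sqrt 20), -(1/Real.sqrt 20),
      -(1/Real.sqrt 20), 4/Real.sqrt 20], ?_, ?_, ?_⟩ <;>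
    · simp only [p, Fin.sum_univ_five, Matrix.cons_val_zero, Matrix.cons_val_one,
        Matrix.head_cons, Matrix.cons_val_two, Matrix.tail_cons, Matrix.cons_val_three,
        Matrix.cons_val_four]
      field_simp
      nlinarith [hs, hs0]
  · refine ⟨![1/Real.sqrt 20, 1/Real.sqrt 20, 1/Real.sqrt 20,
      1/Real.sqrt 20, -(4/Real.sqrt 20)], ?_, ?_, ?_⟩ <;>
    · simp only [p, Fin.sum_univ_five, Matrix.cons_val_zero, Matrix.cons_val_one,
        Matrix.head_cons, Matrix.cons_val_two, Matrix.tail_cons, Matrix.cons_val_three,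
        Matrix.cons_val_four]
      field_simp
      nlinarith [hs, hs0]
end
end

section
/- For C ∈ ℝ, the set A_C = {x ∈ ℝ⁵ : p₁(x) = 0, p₂(x) = 1, p₃(x) = C} is nonempty if and only if |C| ≤ 3/√20. -/
noncomputable section

/- ### Auxiliary lemmas -/

lemma aux_le_two (a b c d e : ℝ) (h1 : a+b+c+d+e = 0) (h2 : a^2+b^2+c^2+d^2+e^2 = 5) :
    a ≤ 2 := by
  have h1' : (b+c+d+e)^2 = a^2 := by linear_combination (b+c+d+e-a) * h1
  have hsq : a^2 ≤ 4 := by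
    nlinarith [sq_nonneg (b-c), sq_nonneg (b-d), sq_nonneg (b-e), sq_nonneg (c-d),
      sq_nonneg (c-e), sq_nonneg (d-e)]
  nlinarith [sq_nonneg (a-2), sq_nonneg (a+2)]

lemma aux_sum3_le (a b c d e : ℝ) (h1 : a+b+c+d+e = 0) (h2 : a^2+b^2+c^2+d^2+e^2 = 5) :
    a^3+b^3+c^3+d^3+e^3 ≤ 15/2 := by
  have ha := aux_le_two a b c d e h1 h2
  have hb := aux_le_two b a c d e (by linarith) (by linarith)
  have hc := aux_le_two c a b d e (by linarith) (by linarith)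
  have hd := aux_le_two d a b c e (by linarith) (by linarith)
  have he := aux_le_two e a b c d (by linarith) (by linarith)
  nlinarith [mul_nonneg (sub_nonneg.2 ha) (sq_nonneg (2*a+1)),
    mul_nonneg (sub_nonneg.2 hb) (sq_nonneg (2*b+1)),
    mul_nonneg (sub_nonneg.2 hc) (sq_nonneg (2*c+1)),
    mul_nonneg (sub_nonneg.2 hd) (sq_nonneg (2*d+1)),
    mul_nonneg (sub_nonneg.2 he) (sq_nonneg (2*e+1))]

lemma aux_sqrt20 : Real.sqrt 20 = 2 * Real.sqrt 5 := by
  rw [show (20:ℝ) = 2^2 * 5 by norm_num, Real.sqrt_mul (by positivity), Real.sqrt_sq (by norm_num)]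

lemma aux_upper (x : Fin 5 → ℝ) (h1 : p 1 x = 0) (h2 : p 2 x = 1) :
    p 3 x ≤ 3 / Real.sqrt 20 := by
  simp only [p, Fin.sum_univ_five, pow_one] at h1 h2 ⊢
  set s := Real.sqrt 5 with hsdef
  have hs : s^2 = 5 := Real.sq_sqrt (by norm_num)
  have hs0 : 0 < s := Real.sqrt_pos.2 (by norm_num)
  have key := aux_sum3_le (s*x 0) (s*x 1) (s*x 2) (s*x 3) (s*x 4)
    (by linear_combination s * h1)
    (by linear_combination s^2 * h2 + hs)
  have e3 : (s*x 0)^3 + (s*x 1)^3 + (s*x 2)^3 + (s*x 3)^3 + (s*x 4)^3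
      = 5 * s * (x 0^3 + x 1^3 + x 2^3 + x 3^3 + x 4^3) := by
    linear_combination (s * (x 0^3 + x 1^3 + x 2^3 + x 3^3 + x 4^3)) * hs
  rw [e3] at key
  rw [aux_sqrt20, le_div_iff₀ (by positivity)]
  nlinarith [key, hs0]

/-- The extremal point family: a circle inside `{p₁ = 0, p₂ = 1}`. -/
def aux_uu : Fin 5 → ℝ := ![2/Real.sqrt 5, -1/(2*Real.sqrt 5), -1/(2*Real.sqrt 5),
  -1/(2*Real.sqrt 5), -1/(2*Real.sqrt 5)]
def aux_vv : Fin 5 → ℝ := ![0, 1/2, 1/2, -1/2, -1/2]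
def aux_f (t : ℝ) : Fin 5 → ℝ := fun i => Real.cos t * aux_uu i + Real.sin t * aux_vv i

lemma aux_ha2 : (2/Real.sqrt 5)^2 = 4/5 := by
  rw [div_pow, Real.sq_sqrt (by norm_num : (5:ℝ) ≥ 0)]; norm_num

lemma aux_hb2 : (-1/(2*Real.sqrt 5))^2 = 1/20 := by
  rw [div_pow, mul_pow, Real.sq_sqrt (by norm_num : (5:ℝ) ≥ 0)]; norm_num

lemma aux_f_mem (t : ℝ) : p 1 (aux_f t) = 0 ∧ p 2 (aux_f t) = 1 := by
  have hpy := Real.sin_sq_add_cos_sq t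
  constructor
  · simp only [p, aux_f, aux_uu, aux_vv, Fin.sum_univ_five, pow_one, Matrix.cons_val_zero,
      Matrix.cons_val_one, Matrix.head_cons, Matrix.cons_val_two, Matrix.tail_cons,
      Matrix.cons_val_three, Matrix.cons_val_four]
    ring
  · simp only [p, aux_f, aux_uu, aux_vv, Fin.sum_univ_five, Matrix.cons_val_zero,
      Matrix.cons_val_one, Matrix.head_cons, Matrix.cons_val_two, Matrix.tail_cons,
      Matrix.cons_val_three, Matrix.cons_val_four]
    linear_combination hpy + Real.cos t ^ 2 * aux_ha2 + 4 * Real.cos t ^ 2 * aux_hb2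

lemma aux_g_zero : p 3 (aux_f 0) = 3 / Real.sqrt 20 := by
  simp only [p, aux_f, aux_uu, aux_vv, Fin.sum_univ_five, Real.cos_zero, Real.sin_zero,
    Matrix.cons_val_zero, Matrix.cons_val_one, Matrix.head_cons, Matrix.cons_val_two,
    Matrix.tail_cons, Matrix.cons_val_three, Matrix.cons_val_four, one_mul, zero_mul]
  rw [aux_sqrt20]
  linear_combination (2/Real.sqrt 5) * aux_ha2 + (4 * (-1/(2*Real.sqrt 5))) * aux_hb2

lemma aux_g_pi : p 3 (aux_f Real.pi) = -(3 / Real.sqrt 20) := by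
  simp only [p, aux_f, aux_uu, aux_vv, Fin.sum_univ_five, Real.cos_pi, Real.sin_pi,
    Matrix.cons_val_zero, Matrix.cons_val_one, Matrix.head_cons, Matrix.cons_val_two,
    Matrix.tail_cons, Matrix.cons_val_three, Matrix.cons_val_four, zero_mul]
  rw [aux_sqrt20]
  linear_combination (-(2/Real.sqrt 5)) * aux_ha2 + (-4 * (-1/(2*Real.sqrt 5))) * aux_hb2

lemma aux_g_cont : Continuous (fun t => p 3 (aux_f t)) := by
  unfold p aux_f
  apply continuous_finset_sum
  intro i _
  fun_prop

/-- `A_C` is nonempty iff `|C| ≤ 3/√20`. -/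
theorem stmt_1 (C : ℝ) : (A C).Nonempty ↔ |C| ≤ 3 / Real.sqrt 20 := by
  constructor
  · rintro ⟨x, hx1, hx2, hx3⟩
    rw [abs_le]
    constructor
    · have h := aux_upper (fun i => -x i)
        (by simp only [p, Fin.sum_univ_five, pow_one] at hx1 ⊢; linarith)
        (by simp only [p, Fin.sum_univ_five] at hx2 ⊢; linarith [hx2])
      have hneg : p 3 (fun i => -x i) = -(p 3 x) := by
        simp only [p, Fin.sum_univ_five]; ring
      rw [hneg, hx3] at h
      linarith
    · rw [← hx3]; exact aux_upper x hx1 hx2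
  · intro hC
    have h := intermediate_value_Icc' Real.pi_pos.le
      (aux_g_cont.continuousOn (s := Set.Icc 0 Real.pi))
    rw [aux_g_zero, aux_g_pi] at h
    obtain ⟨hl, hr⟩ := abs_le.1 hC
    obtain ⟨t, _, ht⟩ := h ⟨hl, hr⟩
    exact ⟨aux_f t, (aux_f_mem t).1, (aux_f_mem t).2, ht⟩
end
end

section
/- The set A_{−3/√20} consists of exactly 5 points, namely the coordinate permutations of the point (1/√20, 1/√20, 1/√20, 1/√20, −4/√20); likewise A_{3/√20} consists of exactly the 5 coordinate permutations of (−1/√20, −1/√20, −1/√20, −1/√20, 4/√20). -/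
noncomputable section

/-!
For `t = ±√20` the map `x ↦ t • x` carries `A (3 / t)` onto the points `y ∈ ℝⁿ`, `n = 5`, with
`∑ yᵢ = 0`, `∑ yᵢ² = n(n-1)`, `∑ yᵢ³ = n(n-1)(n-2)`. On the first two conditions, the squared
distance from `y` to the vertex `vⱼ = (-1, …, n-1, …, -1)` (with `n-1` in slot `j`) is
`2n(n-1-yⱼ)`, so every `yᵢ ≤ n-1`. Then `∑ (yᵢ+1)²(n-1-yᵢ) = n(n-1)(n-2) - ∑ yᵢ³ = 0` is a sum of
nonnegative terms, so every `yᵢ ∈ {-1, n-1}`, and `∑ yᵢ = 0` forces `y` to be one of the `vⱼ`.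
-/

open Finset Function

section PowerSums

variable {n : ℕ}

theorem sum_update_const_pow (b a : ℝ) (j : Fin n) (k : ℕ) :
    ∑ i, update (const (Fin n) b) j a i ^ k = a ^ k + (n - 1) * b ^ k := by
  have hcompl : ∑ i ∈ {j}ᶜ, update (const (Fin n) b) j a i ^ k = ∑ i ∈ {j}ᶜ, b ^ k :=
    sum_congr rfl fun i hi => by rw [update_of_ne (by simpa using hi), const_apply]
  rw [Fintype.sum_eq_add_sum_compl j, hcompl, sum_const, card_compl, card_singleton,
    Fintype.card_fin, nsmul_eq_mul, Nat.cast_sub j.pos, update_self, Nat.cast_one]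

theorem le_sub_one_of_sum_sq_eq {x : Fin n → ℝ} (h1 : ∑ i, x i = 0)
    (h2 : ∑ i, x i ^ 2 = n * (n - 1)) (j : Fin n) : x j ≤ n - 1 := by
  have hn : (0 : ℝ) < n := by exact_mod_cast j.pos
  have hdist : ∑ i, (x i + 1 - if i = j then (n : ℝ) else 0) ^ 2 = 2 * n * (n - 1 - x j) := by
    have hterm : ∀ i, (x i + 1 - if i = j then (n : ℝ) else 0) ^ 2
        = x i ^ 2 + 2 * x i + 1 - if i = j then 2 * n * (x j + 1) - n ^ 2 else 0 := by
      intro i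
      split_ifs with h
      · subst h; ring
      · ring
    simp only [hterm, sum_sub_distrib, sum_add_distrib, ← mul_sum, sum_ite_eq', mem_univ,
      if_true, h1, h2, sum_const, card_univ, Fintype.card_fin, nsmul_eq_mul]
    ring
  have hnonneg := hdist ▸ sum_nonneg fun i _ => sq_nonneg (x i + 1 - if i = j then (n : ℝ) else 0)
  linarith [(mul_nonneg_iff_of_pos_left (mul_pos two_pos hn)).1 hnonneg]

theorem eq_neg_one_or_eq_of_sum_cube_eq {x : Fin n → ℝ} (h1 : ∑ i, x i = 0)
    (h2 : ∑ i, x i ^ 2 = n * (n - 1)) (h3 : ∑ i, x i ^ 3 = n * (n - 1) * (n - 2)) (i : Fin n) :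
    x i = -1 ∨ x i = n - 1 := by
  have hterm : ∀ i, 0 ≤ (x i + 1) ^ 2 * (n - 1 - x i) := fun i =>
    mul_nonneg (sq_nonneg _) (sub_nonneg.2 (le_sub_one_of_sum_sq_eq h1 h2 i))
  have hsum : ∑ i, (x i + 1) ^ 2 * (n - 1 - x i) = 0 := by
    have hexpand : ∀ i, (x i + 1) ^ 2 * (n - 1 - x i)
        = (n - 1) + (2 * n - 3) * x i + (n - 3) * x i ^ 2 - x i ^ 3 := fun i => by ring
    simp only [hexpand, sum_sub_distrib, sum_add_distrib, ← mul_sum, h1, h2, h3, sum_const,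
      card_univ, Fintype.card_fin, nsmul_eq_mul]
    ring
  rcases mul_eq_zero.1 (congrFun ((Fintype.sum_eq_zero_iff_of_nonneg hterm).1 hsum) i) with h | h
  · exact Or.inl (by linarith [pow_eq_zero_iff two_ne_zero |>.1 h])
  · exact Or.inr (by linarith)

theorem exists_eq_update_const_of_sum_cube_eq [NeZero n] {x : Fin n → ℝ} (h1 : ∑ i, x i = 0)
    (h2 : ∑ i, x i ^ 2 = n * (n - 1)) (h3 : ∑ i, x i ^ 3 = n * (n - 1) * (n - 2)) :
    ∃ j, x = update (const (Fin n) (-1 : ℝ)) j (n - 1) := by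
  have hn : (n : ℝ) ≠ 0 := by exact_mod_cast NeZero.ne n
  set S := univ.filter fun i => x i = n - 1
  have hshift : ∀ i, x i + 1 = if i ∈ S then (n : ℝ) else 0 := fun i => by
    rcases eq_neg_one_or_eq_of_sum_cube_eq h1 h2 h3 i with h | h
    · have : i ∉ S := by simpa [S, h] using fun h' => hn (by linarith)
      simp [this, h]
    · simp [S, h]
  have hS : #S = 1 := by
    have hcount : ∑ i, (x i + 1) = #S * n := by
      simp_rw [hshift, sum_ite_mem, univ_inter, sum_const, nsmul_eq_mul]
    rw [sum_add_distrib, h1, sum_const, card_univ, Fintype.card_fin, nsmul_eq_mul] at hcount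
    exact_mod_cast (mul_eq_right₀ hn).1 (by linarith : (#S : ℝ) * n = n)
  obtain ⟨j, hj⟩ := card_eq_one.1 hS
  refine ⟨j, funext fun i => ?_⟩
  have hi := hshift i
  simp only [hj, mem_singleton] at hi
  rw [update_apply]
  split_ifs at hi ⊢
  · linarith
  · rw [const_apply]; linarith

theorem sum_pow_eq_iff_exists_eq_update_const [NeZero n] {x : Fin n → ℝ} :
    (∑ i, x i = 0 ∧ ∑ i, x i ^ 2 = n * (n - 1) ∧ ∑ i, x i ^ 3 = n * (n - 1) * (n - 2)) ↔
      ∃ j, x = update (const (Fin n) (-1 : ℝ)) j (n - 1) := by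
  constructor
  · rintro ⟨h1, h2, h3⟩
    exact exists_eq_update_const_of_sum_cube_eq h1 h2 h3
  · rintro ⟨j, rfl⟩
    have h := sum_update_const_pow (-1 : ℝ) ((n : ℝ) - 1) j
    refine ⟨?_, by rw [h 2]; ring, by rw [h 3]; ring⟩
    simpa using h 1

end PowerSums

theorem update_const_injective {ι α : Type*} [DecidableEq ι] {b a : α} (hab : a ≠ b) :
    Injective fun j => update (const ι b) j a := by
  intro j k h
  by_contra hjk
  have hj : update (const ι b) j a j = update (const ι b) k a j := congrFun h j
  rw [update_self, update_of_ne hjk] at hj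
  exact hab hj

theorem perms_update_const (b a : ℝ) (j : Fin 5) :
    perms (update (const (Fin 5) b) j a) = Set.range fun k => update (const (Fin 5) b) k a := by
  ext x
  constructor
  · rintro ⟨σ, rfl⟩
    exact ⟨σ.symm j, by rw [update_comp_equiv, const_comp]⟩
  · rintro ⟨k, rfl⟩
    refine ⟨Equiv.swap j k, ?_⟩
    rw [update_comp_equiv, const_comp, Equiv.symm_swap, Equiv.swap_apply_left]

theorem p_smul (k : ℕ) (t : ℝ) (x : Fin 5 → ℝ) : p k (t • x) = t ^ k * p k x := by
  simp only [p, Pi.smul_apply, smul_eq_mul, mul_pow, mul_sum]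

theorem mem_A_div_iff {t : ℝ} (ht : t ^ 2 = 20) {x : Fin 5 → ℝ} :
    x ∈ A (3 / t) ↔ p 1 (t • x) = 0 ∧ p 2 (t • x) = 20 ∧ p 3 (t • x) = 60 := by
  have ht0 : t ≠ 0 := by rintro rfl; norm_num at ht
  simp only [A, Set.mem_ofPred_eq, p_smul]
  refine and_congr ?_ (and_congr ?_ ?_)
  · rw [pow_one, mul_eq_zero, or_iff_right ht0]
  · rw [ht]; constructor <;> intro h <;> linarith
  · rw [pow_succ, ht, eq_div_iff ht0]; constructor <;> intro h <;> linarith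

theorem A_div_eq_range {t : ℝ} (ht : t ^ 2 = 20) :
    A (3 / t) = Set.range fun j => update (const (Fin 5) (-(1 / t))) j (4 / t) := by
  have ht0 : t ≠ 0 := by rintro rfl; norm_num at ht
  ext x
  have hvertex := sum_pow_eq_iff_exists_eq_update_const (n := 5) (x := t • x)
  norm_num only at hvertex
  have hdiv : ∀ j, update (const (Fin 5) (-(1 / t))) j (4 / t) =
      (· / t) ∘ update (const (Fin 5) (-1)) j 4 := fun j => by
    rw [comp_update, comp_const, neg_div]
  simp only [mem_A_div_iff ht, p, pow_one, hvertex, Set.mem_range, hdiv]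
  refine exists_congr fun j => ⟨fun h => ?_, fun h => ?_⟩
  · rw [← h]; funext i; exact mul_div_cancel_left₀ (x i) ht0
  · rw [← h]; funext i; exact mul_div_cancel₀ _ ht0

theorem A_div_eq_perms {t : ℝ} (ht : t ^ 2 = 20) :
    A (3 / t) = perms ![-(1 / t), -(1 / t), -(1 / t), -(1 / t), 4 / t] ∧
      (A (3 / t)).ncard = 5 := by
  have ht0 : t ≠ 0 := by rintro rfl; norm_num at ht
  have hvec : ![-(1 / t), -(1 / t), -(1 / t), -(1 / t), 4 / t] =
      update (const (Fin 5) (-(1 / t))) 4 (4 / t) := by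
    funext i; fin_cases i <;> rfl
  have hne : 4 / t ≠ -(1 / t) := by
    rw [ne_eq, ← neg_div, div_left_inj' ht0]; norm_num
  rw [A_div_eq_range ht, hvec, perms_update_const,
    Set.ncard_range_of_injective (update_const_injective hne), Nat.card_fin]
  exact ⟨rfl, rfl⟩

/-- `A_{-3/√20}` consists of exactly the 5 coordinate permutations of
`(1/√20, 1/√20, 1/√20, 1/√20, -4/√20)`, and `A_{3/√20}` of the 5 permutations of
`(-1/√20, -1/√20, -1/√20, -1/√20, 4/√20)`. -/
theorem stmt_2 :
    (A (-(3 / Real.sqrt 20)) =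
        perms ![1 / Real.sqrt 20, 1 / Real.sqrt 20, 1 / Real.sqrt 20, 1 / Real.sqrt 20,
          -(4 / Real.sqrt 20)] ∧
      (A (-(3 / Real.sqrt 20))).ncard = 5) ∧
    (A (3 / Real.sqrt 20) =
        perms ![-(1 / Real.sqrt 20), -(1 / Real.sqrt 20), -(1 / Real.sqrt 20), -(1 / Real.sqrt 20),
          4 / Real.sqrt 20] ∧
      (A (3 / Real.sqrt 20)).ncard = 5) := by
  have hsq : Real.sqrt 20 ^ 2 = 20 := Real.sq_sqrt (by norm_num)
  have hneg := A_div_eq_perms (t := -Real.sqrt 20) (by rw [neg_sq, hsq])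
  simp only [div_neg, neg_neg] at hneg
  exact ⟨hneg, A_div_eq_perms hsq⟩
end
end

section
/- The critical points of p₃ restricted to the set {x ∈ ℝ⁵ : p₁(x) = 0, p₂(x) = 1} (i.e., points where ∇p₃(x) ∈ span{∇p₁(x), ∇p₂(x)}) are exactly the coordinate permutations of the points (±1/√20, ±1/√20, ±1/√20, ±1/√20, ∓4/√20) and (±2/√30, ±2/√30, ±2/√30, ∓3/√30, ∓3/√30); in particular there are exactly 30 such critical points. -/
noncomputable section

/-!
The Lagrange condition `∇p₃ = a ∇p₁ + b ∇p₂` says `3 xᵢ² = a + 2 b xᵢ` for every `i`: all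
coordinates are roots of one quadratic, so `x` takes at most two values `r, s`, and conversely
every such `x` satisfies it. If `r` is taken `k ≥ 3` times, the constraints read
`k r + (5 - k) s = 0` and `k r² + (5 - k) s² = 1`, which force either `k = 4`, `r = ±1/√20`,
`s = -4 r` or `k = 3`, `r = ±2/√30`, `s = -3 r / 2`. Placing the `r`s gives
`2 (C(5,4) + C(5,3)) = 30` points.
-/

open Finset

section TwoValued

variable {α ι : Type*} [DecidableEq ι]

def twoValued (r s : α) (S : Finset ι) : ι → α := fun i => if i ∈ S then r else s

def arrangements (r s : α) (k : ℕ) : Set (ι → α) := twoValued r s '' {S | S.card = k}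

lemma eq_twoValued_of_forall_eq_or_eq [DecidableEq α] [Fintype ι] {r s : α} {x : ι → α}
    (h : ∀ i, x i = r ∨ x i = s) : x = twoValued r s {i | x i = r} := by
  funext i
  by_cases hi : x i = r
  · simp [twoValued, hi]
  · simp [twoValued, (h i).resolve_left hi]

lemma twoValued_injective {r s : α} (hrs : r ≠ s) :
    Function.Injective (twoValued r s : Finset ι → ι → α) := by
  intro S T h
  ext i
  have := congrFun h i
  by_cases hS : i ∈ S <;> by_cases hT : i ∈ T <;> simp_all [twoValued, hrs.symm]

lemma twoValued_compl [Fintype ι] (r s : α) (S : Finset ι) :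
    twoValued r s S = twoValued s r Sᶜ := by
  funext i
  by_cases hi : i ∈ S <;> simp [twoValued, hi]

lemma twoValued_comp_perm (r s : α) (S : Finset ι) (σ : Equiv.Perm ι) :
    twoValued r s S ∘ σ = twoValued r s (S.map σ.symm.toEmbedding) := by
  funext i
  simp [twoValued]

lemma ncard_arrangements [Fintype ι] {r s : α} (hrs : r ≠ s) (k : ℕ) :
    (arrangements r s k : Set (ι → α)).ncard = (Fintype.card ι).choose k := by
  have : {S : Finset ι | S.card = k} = (powersetCard k univ : Finset (Finset ι)) := by
    ext S; simp
  rw [arrangements, Set.ncard_image_of_injective _ (twoValued_injective hrs), this,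
    Set.ncard_coe_finset, card_powersetCard, card_univ]

lemma disjoint_arrangements {r s r' s' : α} {k k' : ℕ} (hr : r ≠ r') (hs : r ≠ s')
    (hk : k ≠ 0) : Disjoint (arrangements r s k : Set (ι → α)) (arrangements r' s' k') := by
  rw [Set.disjoint_left]
  rintro _ ⟨S, hS, rfl⟩ ⟨T, -, hST⟩
  obtain ⟨i, hi⟩ : S.Nonempty := Finset.card_ne_zero.mp (hS ▸ hk)
  have := congrFun hST i
  by_cases hT : i ∈ T <;> simp_all [twoValued]

instance [Fintype ι] (r s : α) (k : ℕ) :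
    Finite (arrangements r s k : Set (ι → α)) :=
  inferInstanceAs (Finite (twoValued r s '' _))

end TwoValued

lemma perms_twoValued (r s : ℝ) (S₀ : Finset (Fin 5)) :
    perms (twoValued r s S₀) = arrangements r s S₀.card := by
  ext x
  constructor
  · rintro ⟨σ, rfl⟩
    exact ⟨S₀.map σ.symm.toEmbedding, card_map _, (twoValued_comp_perm r s S₀ σ).symm⟩
  · rintro ⟨S, hS, rfl⟩
    obtain ⟨σ, hσ⟩ := Equiv.Perm.exists_map_finset_eq S S₀ hS
    refine ⟨σ, ?_⟩
    rw [twoValued_comp_perm, ← hσ, map_map]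
    simp

lemma perms_eq_arrangements_four (r s : ℝ) : perms ![r, r, r, r, s] = arrangements r s 4 := by
  have : ![r, r, r, r, s] = twoValued r s {0, 1, 2, 3} := by
    funext i; fin_cases i <;> simp [twoValued]
  rw [this, perms_twoValued]
  rfl

lemma perms_eq_arrangements_three (r s : ℝ) : perms ![r, r, r, s, s] = arrangements r s 3 := by
  have : ![r, r, r, s, s] = twoValued r s {0, 1, 2} := by
    funext i; fin_cases i <;> simp [twoValued]
  rw [this, perms_twoValued]
  rfl

lemma p_twoValued (n : ℕ) (r s : ℝ) (S : Finset (Fin 5)) :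
    p n (twoValued r s S) = S.card * r ^ n + Sᶜ.card * s ^ n := by
  simp [p, twoValued, ite_pow, Finset.sum_ite, Finset.filter_not, ← Finset.compl_eq_univ_sdiff]

lemma grad_mem_span_iff (x : Fin 5 → ℝ) :
    grad 3 x ∈ Submodule.span ℝ ({grad 1 x, grad 2 x} : Set (Fin 5 → ℝ)) ↔
      ∃ r s : ℝ, ∀ i, x i = r ∨ x i = s := by
  norm_num [Submodule.mem_span_pair, funext_iff, grad]
  constructor
  · rintro ⟨a, b, h⟩
    refine ⟨x 0, 2 * b / 3 - x 0, fun i => ?_⟩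
    have : (x i - x 0) * (x i - (2 * b / 3 - x 0)) = 0 := by
      linear_combination (h 0 - h i) / 3
    rcases mul_eq_zero.mp this with hr | hs
    · exact .inl (sub_eq_zero.mp hr)
    · exact .inr (sub_eq_zero.mp hs)
  · rintro ⟨r, s, h⟩
    refine ⟨-3 * r * s, 3 / 2 * (r + s), fun i => ?_⟩
    rcases h i with hi | hi <;> rw [hi] <;> ring

def criticalSet : Set (Fin 5 → ℝ) :=
  {x | p 1 x = 0 ∧ p 2 x = 1 ∧
    grad 3 x ∈ Submodule.span ℝ ({grad 1 x, grad 2 x} : Set (Fin 5 → ℝ))}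

lemma twoValued_mem_criticalSet_iff (r s : ℝ) (S : Finset (Fin 5)) :
    twoValued r s S ∈ criticalSet ↔
      S.card * r + Sᶜ.card * s = 0 ∧ S.card * r ^ 2 + Sᶜ.card * s ^ 2 = 1 := by
  have hspan : ∃ r' s' : ℝ, ∀ i, twoValued r s S i = r' ∨ twoValued r s S i = s' :=
    ⟨r, s, fun i => by by_cases hi : i ∈ S <;> simp [twoValued, hi]⟩
  simp only [criticalSet, Set.mem_ofPred_eq, grad_mem_span_iff, hspan, and_true, p_twoValued,
    pow_one]

lemma eq_or_eq_neg_div_sqrt {r c d : ℝ} (hd : 0 < d) (h : d * r ^ 2 = c ^ 2) :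
    r = c / √d ∨ r = -(c / √d) := by
  apply sq_eq_sq_iff_eq_or_eq_neg.mp
  rw [div_pow, Real.sq_sqrt hd.le, eq_div_iff hd.ne']
  linarith

def criticalPoints : Set (Fin 5 → ℝ) :=
  arrangements (1 / √20) (-(4 / √20)) 4 ∪ arrangements (-(1 / √20)) (4 / √20) 4 ∪
    arrangements (2 / √30) (-(3 / √30)) 3 ∪ arrangements (-(2 / √30)) (3 / √30) 3

lemma twoValued_mem_criticalPoints {r s : ℝ} {S : Finset (Fin 5)} (hS : 3 ≤ S.card)
    (h₁ : S.card * r + Sᶜ.card * s = 0) (h₂ : S.card * r ^ 2 + Sᶜ.card * s ^ 2 = 1) :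
    twoValued r s S ∈ criticalPoints := by
  have hcompl : Sᶜ.card = 5 - S.card := by rw [card_compl, Fintype.card_fin]
  obtain ⟨k, hk⟩ : ∃ k, S.card = k := ⟨_, rfl⟩
  have hk5 : k ≤ 5 := hk ▸ card_le_univ S
  rw [hk] at hS h₁ h₂ hcompl
  rw [hcompl] at h₁ h₂
  interval_cases k <;> norm_num at h₁ h₂
  · have hs : s = -3 / 2 * r := by linarith
    subst hs
    rcases eq_or_eq_neg_div_sqrt (c := 2) (d := 30) (by norm_num) (by linarith)
      with rfl | rfl
    · exact .inl (.inr ⟨S, hk, by congr 1; ring⟩)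
    · exact .inr ⟨S, hk, by congr 1; ring⟩
  · have hs : s = -4 * r := by linarith
    subst hs
    rcases eq_or_eq_neg_div_sqrt (c := 1) (d := 20) (by norm_num) (by linarith)
      with rfl | rfl
    · exact .inl (.inl (.inl ⟨S, hk, by congr 1; ring⟩))
    · exact .inl (.inl (.inr ⟨S, hk, by congr 1; ring⟩))
  · nlinarith

lemma criticalSet_eq : criticalSet = criticalPoints := by
  ext x
  constructor
  · intro hx
    obtain ⟨r, s, hrs⟩ := (grad_mem_span_iff x).mp hx.2.2
    rw [eq_twoValued_of_forall_eq_or_eq hrs] at hx ⊢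
    set S : Finset (Fin 5) := {i | x i = r}
    have hcard : S.card + Sᶜ.card = 5 := by rw [card_add_card_compl, Fintype.card_fin]
    rcases le_or_gt 3 S.card with hS | hS
    · exact twoValued_mem_criticalPoints hS
        ((twoValued_mem_criticalSet_iff r s S).mp hx).1
        ((twoValued_mem_criticalSet_iff r s S).mp hx).2
    · rw [twoValued_compl] at hx ⊢
      obtain ⟨h₁, h₂⟩ := (twoValued_mem_criticalSet_iff s r Sᶜ).mp hx
      exact twoValued_mem_criticalPoints (by omega) h₁ h₂
  · have h20 : √20 ^ 2 = 20 := Real.sq_sqrt (by norm_num)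
    have h30 : √30 ^ 2 = 30 := Real.sq_sqrt (by norm_num)
    rintro (((⟨S, hS, rfl⟩ | ⟨S, hS, rfl⟩) | ⟨S, hS, rfl⟩) | ⟨S, hS, rfl⟩) <;>
    · rw [twoValued_mem_criticalSet_iff, card_compl, Fintype.card_fin, hS]
      constructor
      · push_cast; ring
      · field_simp; norm_num [h20, h30]

lemma ncard_criticalPoints : criticalPoints.ncard = 30 := by
  have h20 : √20 ^ 2 = 20 := Real.sq_sqrt (by norm_num)
  have h30 : √30 ^ 2 = 30 := Real.sq_sqrt (by norm_num)
  have h20_pos : 0 < √20 := by positivity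
  have h30_pos : 0 < √30 := by positivity
  rw [criticalPoints, Set.ncard_union_eq, Set.ncard_union_eq, Set.ncard_union_eq,
    ncard_arrangements, ncard_arrangements, ncard_arrangements, ncard_arrangements]
  · rfl
  all_goals try simp only [Set.disjoint_union_left]
  repeat' apply And.intro
  all_goals try refine disjoint_arrangements ?_ ?_ (by norm_num)
  -- the eight values ±1/√20, ±4/√20, ±2/√30, ±3/√30 are pairwise distinct
  all_goals intro h; field_simp at h; nlinarith

/-- the critical points of `p₃` on `{p₁ = 0, p₂ = 1}` are exactly the coordinate
permutations of `(±1/√20, ±1/√20, ±1/√20, ±1/√20, ∓4/√20)` and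
`(±2/√30, ±2/√30, ±2/√30, ∓3/√30, ∓3/√30)`; there are exactly 30 of them. -/
theorem stmt_4 :
    ({x : Fin 5 → ℝ | p 1 x = 0 ∧ p 2 x = 1 ∧
        grad 3 x ∈ Submodule.span ℝ ({grad 1 x, grad 2 x} : Set (Fin 5 → ℝ))} =
      perms ![1 / Real.sqrt 20, 1 / Real.sqrt 20, 1 / Real.sqrt 20, 1 / Real.sqrt 20,
          -(4 / Real.sqrt 20)] ∪
      perms ![-(1 / Real.sqrt 20), -(1 / Real.sqrt 20), -(1 / Real.sqrt 20), -(1 / Real.sqrt 20),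
          4 / Real.sqrt 20] ∪
      perms ![2 / Real.sqrt 30, 2 / Real.sqrt 30, 2 / Real.sqrt 30, -(3 / Real.sqrt 30),
          -(3 / Real.sqrt 30)] ∪
      perms ![-(2 / Real.sqrt 30), -(2 / Real.sqrt 30), -(2 / Real.sqrt 30), 3 / Real.sqrt 30,
          3 / Real.sqrt 30]) ∧
    {x : Fin 5 → ℝ | p 1 x = 0 ∧ p 2 x = 1 ∧
        grad 3 x ∈ Submodule.span ℝ ({grad 1 x, grad 2 x} : Set (Fin 5 → ℝ))}.ncard = 30 := by
  refine ⟨?_, ?_⟩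
  · change criticalSet = _
    rw [criticalSet_eq, criticalPoints, perms_eq_arrangements_four, perms_eq_arrangements_four,
      perms_eq_arrangements_three, perms_eq_arrangements_three]
  · change criticalSet.ncard = 30
    rw [criticalSet_eq, ncard_criticalPoints]
end
end

section
/- Let x ∈ A_C for some C ∈ ℝ. The three gradients ∇p₁(x) = (1,…,1), ∇p₂(x) = (2x₁,…,2x₅), ∇p₃(x) = (3x₁²,…,3x₅²) are linearly dependent if and only if the coordinates x₁,…,x₅ take fewer than three distinct values. -/
noncomputable section

/-!
A linear relation `∑ j < n, c j • (xᵢ ^ j)ᵢ = 0` is a polynomial of degree `< n` vanishing at every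
coordinate `xᵢ`. A nonzero one exists iff the coordinates take fewer than `n` values: it cannot
have more roots than its degree, and `∏ₐ (X - a)` over the values `a` is one. The gradients
`∇p₁, ∇p₂, ∇p₃` are the rows `1, x, x²` scaled by `1, 2, 3`.
-/

open Polynomial

section
variable {R ι : Type*} [CommRing R] {n : ℕ}

lemma sum_degreeLTEquiv_smul_pow (x : ι → R) {p : R[X]} (hp : p ∈ degreeLT R n) :
    ∑ j, degreeLTEquiv R n ⟨p, hp⟩ j • (fun i => x i ^ (j : ℕ)) = fun i => p.eval (x i) := by
  ext i
  simp [eval_eq_sum_degreeLTEquiv hp]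

variable [IsDomain R] [Finite ι]

lemma eq_zero_of_mem_degreeLT_of_eval_eq_zero (x : ι → R) (hn : n ≤ (Set.range x).ncard)
    {p : R[X]} (hp : p ∈ degreeLT R n) (heval : ∀ i, p.eval (x i) = 0) : p = 0 := by
  by_contra hp0
  refine hp0 (eq_zero_of_natDegree_lt_card_of_eval_eq_zero' p (Set.finite_range x).toFinset ?_ ?_)
  · simpa using heval
  · rw [← Set.ncard_eq_toFinset_card _ (Set.finite_range x)]
    exact ((natDegree_lt_iff_degree_lt hp0).2 (mem_degreeLT.1 hp)).trans_le hn

lemma exists_mem_degreeLT_eval_eq_zero (x : ι → R) (hn : (Set.range x).ncard < n) :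
    ∃ p ∈ degreeLT R n, p ≠ 0 ∧ ∀ i, p.eval (x i) = 0 := by
  set values := (Set.finite_range x).toFinset
  have hmonic : (∏ a ∈ values, (X - C a)).Monic := monic_prod_X_sub_C _ _
  refine ⟨∏ a ∈ values, (X - C a), ?_, hmonic.ne_zero, fun i => ?_⟩
  · rw [mem_degreeLT, degree_eq_natDegree hmonic.ne_zero, natDegree_finsetProd_X_sub_C_eq_card,
      ← Set.ncard_eq_toFinset_card _ (Set.finite_range x)]
    exact_mod_cast hn
  · rw [eval_prod]
    exact Finset.prod_eq_zero (i := x i) (by simp [values]) (by simp)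

theorem linearIndependent_pow_iff (x : ι → R) :
    LinearIndependent R (fun (j : Fin n) i => x i ^ (j : ℕ)) ↔ n ≤ (Set.range x).ncard := by
  rw [Fintype.linearIndependent_iff]
  constructor
  · intro h
    by_contra! hlt
    obtain ⟨p, hp, hp0, heval⟩ := exists_mem_degreeLT_eval_eq_zero x hlt
    have hcoeff := h _ ((sum_degreeLTEquiv_smul_pow x hp).trans (funext heval))
    exact hp0 ((degreeLTEquiv_eq_zero_iff_eq_zero hp).1 (funext hcoeff))
  · intro hn g hg
    obtain ⟨⟨p, hp⟩, rfl⟩ := (degreeLTEquiv R n).surjective g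
    rw [sum_degreeLTEquiv_smul_pow] at hg
    rw [(degreeLTEquiv_eq_zero_iff_eq_zero hp).2
      (eq_zero_of_mem_degreeLT_of_eval_eq_zero x hn hp (congrFun hg))]
    exact fun _ => rfl

end

theorem linearIndependent_grad_iff (x : Fin 5 → ℝ) (n : ℕ) :
    LinearIndependent ℝ (fun j : Fin n => grad (j + 1) x) ↔ n ≤ (Set.range x).ncard := by
  have hgrad : (fun j : Fin n => grad (j + 1) x) =
      (fun j : Fin n => Units.mk0 ((j : ℝ) + 1) (by positivity)) •
        fun (j : Fin n) i => x i ^ (j : ℕ) := by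
    ext j i
    simp [grad]
  rw [hgrad, LinearIndependent.units_smul_iff, linearIndependent_pow_iff]

theorem stmt_5_general (x : Fin 5 → ℝ) :
    ¬ LinearIndependent ℝ ![grad 1 x, grad 2 x, grad 3 x] ↔ (Set.range x).ncard < 3 := by
  have hfamily : ![grad 1 x, grad 2 x, grad 3 x] = fun j : Fin 3 => grad (j + 1) x := by
    ext j : 1
    fin_cases j <;> rfl
  rw [hfamily, linearIndependent_grad_iff, not_le]

/-- for `x ∈ A_C`, the gradients `∇p₁(x), ∇p₂(x), ∇p₃(x)` are linearly
dependent iff the coordinates of `x` take fewer than three distinct values. -/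
theorem stmt_5 (C : ℝ) (x : Fin 5 → ℝ) (hx : x ∈ A C) :
    ¬ LinearIndependent ℝ ![grad 1 x, grad 2 x, grad 3 x] ↔ (Set.range x).ncard < 3 :=
  stmt_5_general x
end
end

section
/- Let C ∈ ℝ and let x ∈ A_C be a point at which ∇p₁(x), ∇p₂(x), ∇p₃(x) are linearly independent. Then ∇p₄(x) = (4x₁³,…,4x₅³) lies in the linear span of ∇p₁(x), ∇p₂(x), ∇p₃(x) if and only if the coordinates x₁,…,x₅ take at most three distinct values. -/
noncomputable section

/-! Coordinatewise, `∇p₁, ∇p₂, ∇p₃, ∇p₄` are nonzero multiples of `1, x, x², x³`. So `∇p₄` lies in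
the span of the other three iff `x³ = a + b x + c x²` at every coordinate, i.e. iff all coordinates
are roots of one monic cubic. A monic cubic has at most three roots, and any set of at most three
reals is the root set of a monic cubic (the product of the `X - a`, padded with factors `X`). -/

open Polynomial

theorem Set.ncard_le_iff_exists_monic_isRoot {K : Type*} [Field K] {s : Set K} (hs : s.Finite)
    (n : ℕ) : s.ncard ≤ n ↔ ∃ q : K[X], q.Monic ∧ q.natDegree = n ∧ ∀ a ∈ s, q.IsRoot a := by
  classical
  constructor
  · intro hn
    set t := hs.toFinset
    have hcard : t.card ≤ n := by rwa [← Set.ncard_eq_toFinset_card s hs]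
    have hprod : (∏ a ∈ t, (X - C a)).Monic := monic_prod_of_monic _ _ fun a _ => monic_X_sub_C a
    refine ⟨(∏ a ∈ t, (X - C a)) * X ^ (n - t.card), hprod.mul (monic_X_pow _), ?_, ?_⟩
    · rw [hprod.natDegree_mul (monic_X_pow _), natDegree_finsetProd_X_sub_C_eq_card t (fun a => a),
        natDegree_X_pow]
      omega
    · intro a ha
      simp only [IsRoot, eval_mul, eval_prod, eval_sub, eval_X, eval_C]
      rw [Finset.prod_eq_zero (hs.mem_toFinset.2 ha) (sub_self a), zero_mul]
  · rintro ⟨q, hq, rfl, hroot⟩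
    have hsub : s ⊆ ↑q.roots.toFinset := fun a ha => by
      simpa [mem_roots hq.ne_zero] using hroot a ha
    calc s.ncard ≤ (q.roots.toFinset : Set K).ncard :=
          Set.ncard_le_ncard hsub (Finset.finite_toSet _)
      _ = q.roots.toFinset.card := Set.ncard_coe_finset _
      _ ≤ Multiset.card q.roots := Multiset.toFinset_card_le _
      _ ≤ q.natDegree := q.card_roots'

theorem pow_mem_span_pow_iff_exists_monic_isRoot {K ι : Type*} [Field K] (x : ι → K) (n : ℕ) :
    (fun i => x i ^ n) ∈ Submodule.span K (Set.range fun k : Fin n => fun i => x i ^ (k : ℕ)) ↔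
      ∃ q : K[X], q.Monic ∧ q.natDegree = n ∧ ∀ i, q.IsRoot (x i) := by
  rw [Submodule.mem_span_range_iff_exists_fun]
  constructor
  · rintro ⟨c, hc⟩
    have hlt := degree_sum_fin_lt c
    refine ⟨X ^ n - ∑ k : Fin n, C (c k) * X ^ (k : ℕ), monic_X_pow_sub hlt, ?_, fun i => ?_⟩
    · refine natDegree_eq_of_degree_eq_some ?_
      rw [degree_sub_eq_left_of_degree_lt (by rwa [degree_X_pow]), degree_X_pow]
    · have := congrFun hc i
      simp only [Finset.sum_apply, Pi.smul_apply, smul_eq_mul] at this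
      simp [eval_finsetSum, this]
  · rintro ⟨q, hq, rfl, hroot⟩
    refine ⟨fun k => -q.coeff k, funext fun i => ?_⟩
    have := hroot i
    rw [IsRoot, hq.as_sum] at this
    simp only [eval_add, eval_pow, eval_X, eval_finsetSum, eval_mul, eval_C] at this
    simp only [Finset.sum_apply, Pi.smul_apply, smul_eq_mul, neg_mul, Finset.sum_neg_distrib,
      Fin.sum_univ_eq_sum_range (fun k => q.coeff k * x i ^ k)]
    linear_combination -this

theorem pow_mem_span_pow_iff {K ι : Type*} [Field K] [Finite ι] (x : ι → K) (n : ℕ) :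
    (fun i => x i ^ n) ∈ Submodule.span K (Set.range fun k : Fin n => fun i => x i ^ (k : ℕ)) ↔
      (Set.range x).ncard ≤ n := by
  rw [pow_mem_span_pow_iff_exists_monic_isRoot,
    Set.ncard_le_iff_exists_monic_isRoot (Set.finite_range x)]
  simp only [Set.forall_mem_range]

theorem grad_eq_smul (k : ℕ) (x : Fin 5 → ℝ) : grad k x = (k : ℝ) • fun i => x i ^ (k - 1) := rfl

theorem span_grad_eq_span_pow (x : Fin 5 → ℝ) :
    Submodule.span ℝ ({grad 1 x, grad 2 x, grad 3 x} : Set (Fin 5 → ℝ)) =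
      Submodule.span ℝ (Set.range fun k : Fin 3 => fun i => x i ^ (k : ℕ)) := by
  have hrange : (Set.range fun k : Fin 3 => fun i => x i ^ (k : ℕ)) =
      {fun i => x i ^ 0, fun i => x i ^ 1, fun i => x i ^ 2} := by
    ext v
    simp [Fin.exists_fin_succ, eq_comm]
  have hunit (k : ℕ) (hk : k ≠ 0) : IsUnit (k : ℝ) := (Nat.cast_ne_zero.2 hk).isUnit
  rw [hrange, grad_eq_smul 1, grad_eq_smul 2, grad_eq_smul 3]
  simp only [Submodule.span_insert]
  rw [Submodule.span_singleton_smul_eq (hunit 1 one_ne_zero),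
    Submodule.span_singleton_smul_eq (hunit 2 two_ne_zero),
    Submodule.span_singleton_smul_eq (hunit 3 three_ne_zero)]

theorem stmt_8_general (x : Fin 5 → ℝ) :
    grad 4 x ∈ Submodule.span ℝ ({grad 1 x, grad 2 x, grad 3 x} : Set (Fin 5 → ℝ)) ↔
      (Set.range x).ncard ≤ 3 := by
  rw [grad_eq_smul 4, Submodule.smul_mem_iff _ (by norm_num), span_grad_eq_span_pow]
  exact pow_mem_span_pow_iff x 3

/-- for `x ∈ A_C` at which `∇p₁(x), ∇p₂(x), ∇p₃(x)` are linearly independent,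
`∇p₄(x)` lies in their span iff the coordinates of `x` take at most three distinct values. -/
theorem stmt_8 (C : ℝ) (x : Fin 5 → ℝ) (hx : x ∈ A C)
    (hli : LinearIndependent ℝ ![grad 1 x, grad 2 x, grad 3 x]) :
    grad 4 x ∈ Submodule.span ℝ ({grad 1 x, grad 2 x, grad 3 x} : Set (Fin 5 → ℝ)) ↔
      (Set.range x).ncard ≤ 3 :=
  stmt_8_general x
end
end

section
/- Let α, β, γ ∈ ℝ. The system 3α + β + γ = 0, 3α² + β² + γ² = 1, 3α³ + β³ + γ³ = C has a solution if and only if there exists t ∈ [−√(6/5), √(6/5)] with (10/9)t³ − (3/2)t + C = 0 such that α = −t/3 and {β, γ} = {(t + √(2 − (5/3)t²))/2, (t − √(2 − (5/3)t²))/2}. -/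
/-- `(α, β, γ)` solves the system `3α + β + γ = 0`, `3α² + β² + γ² = 1`,
`3α³ + β³ + γ³ = C` iff there is `t ∈ [-√(6/5), √(6/5)]` with `(10/9)t³ - (3/2)t + C = 0`
such that `α = -t/3` and `{β, γ} = {(t + √(2 - (5/3)t²))/2, (t - √(2 - (5/3)t²))/2}`. -/
theorem stmt_10 (α β γ C : ℝ) :
    (3 * α + β + γ = 0 ∧ 3 * α ^ 2 + β ^ 2 + γ ^ 2 = 1 ∧
      3 * α ^ 3 + β ^ 3 + γ ^ 3 = C) ↔
    ∃ t ∈ Set.Icc (-Real.sqrt (6 / 5)) (Real.sqrt (6 / 5)),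
      (10 / 9) * t ^ 3 - (3 / 2) * t + C = 0 ∧ α = -t / 3 ∧
      ({β, γ} : Set ℝ) =
        {(t + Real.sqrt (2 - (5 / 3) * t ^ 2)) / 2, (t - Real.sqrt (2 - (5 / 3) * t ^ 2)) / 2} := by
  constructor
  · rintro ⟨h1, h2, h3⟩
    have hα : α = -(β + γ) / 3 := by linarith
    subst hα
    refine ⟨β + γ, ?_, ?_, by ring, ?_⟩
    · have habs : |β + γ| ≤ Real.sqrt (6 / 5) := by
        rw [← Real.sqrt_sq_eq_abs]
        exact Real.sqrt_le_sqrt (by nlinarith [sq_nonneg (β - γ)])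
      exact Set.mem_Icc.mpr (abs_le.mp habs)
    · linear_combination (3 / 2 * (β + γ)) * h2 - h3
    · have hd : 2 - 5 / 3 * (β + γ) ^ 2 = (β - γ) ^ 2 := by linear_combination -2 * h2
      rcases le_total γ β with hle | hle
      · have hs : Real.sqrt (2 - 5 / 3 * (β + γ) ^ 2) = β - γ := by
          rw [hd, Real.sqrt_sq (by linarith)]
        rw [hs]
        have e1 : (β + γ + (β - γ)) / 2 = β := by ring
        have e2 : (β + γ - (β - γ)) / 2 = γ := by ring
        rw [e1, e2]
      · have hs : Real.sqrt (2 - 5 / 3 * (β + γ) ^ 2) = γ - β := by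
          rw [hd, show (β - γ) ^ 2 = (γ - β) ^ 2 by ring, Real.sqrt_sq (by linarith)]
        rw [hs]
        have e1 : (β + γ + (γ - β)) / 2 = γ := by ring
        have e2 : (β + γ - (γ - β)) / 2 = β := by ring
        rw [e1, e2, Set.pair_comm]
  · rintro ⟨t, ht, heq, hα, hset⟩
    subst hα
    obtain ⟨ht1, ht2⟩ := Set.mem_Icc.mp ht
    have ht2' : t ^ 2 ≤ 6 / 5 := by
      have := abs_le.mpr ⟨ht1, ht2⟩
      calc t ^ 2 = |t| ^ 2 := (sq_abs t).symm
        _ ≤ Real.sqrt (6 / 5) ^ 2 := by gcongr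
        _ = 6 / 5 := Real.sq_sqrt (by norm_num)
    have hd : (0 : ℝ) ≤ 2 - 5 / 3 * t ^ 2 := by nlinarith
    have hs : Real.sqrt (2 - 5 / 3 * t ^ 2) ^ 2 = 2 - 5 / 3 * t ^ 2 := Real.sq_sqrt hd
    rcases Set.pair_eq_pair_iff.mp hset with ⟨hb, hg⟩ | ⟨hb, hg⟩ <;> subst hb <;> subst hg <;>
      refine ⟨by ring, by linear_combination hs / 2, by linear_combination 3 / 4 * t * hs - heq⟩
end

section
/- For every C ∈ (1/√30, 3/√20), the cubic polynomial 15t³ − (3/2)t + C has exactly one real root in the interval [−1/√5, 1/√5], and this root lies in the open interval (−1/√5, −1/√30). -/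
set_option maxHeartbeats 1000000 in
/-- for `C ∈ (1/√30, 3/√20)`, the cubic `15t³ - (3/2)t + C` has exactly one root
in `[-1/√5, 1/√5]`, and this root lies in `(-1/√5, -1/√30)`. -/
theorem stmt_14 (C : ℝ) (hC : C ∈ Set.Ioo (1 / Real.sqrt 30) (3 / Real.sqrt 20)) :
    (∃! t : ℝ, t ∈ Set.Icc (-(1 / Real.sqrt 5)) (1 / Real.sqrt 5) ∧
      15 * t ^ 3 - (3 / 2) * t + C = 0) ∧
    (∀ t ∈ Set.Icc (-(1 / Real.sqrt 5)) (1 / Real.sqrt 5), 15 * t ^ 3 - (3 / 2) * t + C = 0 →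
      t ∈ Set.Ioo (-(1 / Real.sqrt 5)) (-(1 / Real.sqrt 30))) := by
  obtain ⟨hC1, hC2⟩ := hC
  have h5 : Real.sqrt 5 > 0 := Real.sqrt_pos.mpr (by norm_num)
  have h30 : Real.sqrt 30 > 0 := Real.sqrt_pos.mpr (by norm_num)
  have e5 : Real.sqrt 5 ^ 2 = 5 := Real.sq_sqrt (by norm_num)
  have e30 : Real.sqrt 30 ^ 2 = 30 := Real.sq_sqrt (by norm_num)
  have e20 : Real.sqrt 20 = 2 * Real.sqrt 5 := by
    rw [show (20:ℝ) = 4 * 5 by norm_num, Real.sqrt_mul (by norm_num),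
      show Real.sqrt 4 = 2 by rw [show (4:ℝ) = 2 ^ 2 by norm_num, Real.sqrt_sq (by norm_num)]]
  set r : ℝ := 1 / Real.sqrt 30 with hr_def
  set q : ℝ := 1 / Real.sqrt 5 with hq_def
  have hrpos : 0 < r := by positivity
  have hqpos : 0 < q := by positivity
  have hr2 : r ^ 2 = 1 / 30 := by rw [hr_def]; rw [div_pow, e30]; norm_num
  have hq2 : q ^ 2 = 1 / 5 := by rw [hq_def]; rw [div_pow, e5]; norm_num
  have hrq : r < q := by
    rw [hr_def, hq_def]
    exact one_div_lt_one_div_of_lt h5 (Real.sqrt_lt_sqrt (by norm_num) (by norm_num))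
  have hC1' : r < C := hC1
  have hC2' : C < 3 / 2 * q := by
    rw [hq_def]
    calc C < 3 / Real.sqrt 20 := hC2
    _ = 3 / 2 * (1 / Real.sqrt 5) := by rw [e20]; ring
  -- factorization: for t ≥ -r, f t > 0
  have keyfact : ∀ t : ℝ, 15 * t ^ 3 - (3 / 2) * t + C
      = (C - r) + 15 * (t - r) ^ 2 * (t + 2 * r) := by
    intro t
    linear_combination (45 * t - 30 * r) * hr2
  have hpos : ∀ t : ℝ, -r ≤ t → 0 < 15 * t ^ 3 - (3 / 2) * t + C := by
    intro t ht
    rw [keyfact t]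
    have h1 : 0 ≤ 15 * (t - r) ^ 2 * (t + 2 * r) := by
      apply mul_nonneg (by positivity)
      nlinarith
    nlinarith
  -- strict monotonicity on [-q, -r]
  have hmono : ∀ s t : ℝ, -q ≤ s → s < t → t ≤ -r →
      15 * s ^ 3 - (3 / 2) * s + C < 15 * t ^ 3 - (3 / 2) * t + C := by
    intro s t hs hst ht
    have hs2 : s ^ 2 > 1 / 30 := by nlinarith
    have ht2 : t ^ 2 ≥ 1 / 30 := by nlinarith
    have hst2 : s * t ≥ 1 / 30 := by nlinarith
    nlinarith [mul_pos (sub_pos.mpr hst)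
      (show (0:ℝ) < 15 * (s ^ 2 + s * t + t ^ 2) - 3 / 2 by nlinarith)]
  have hfa : 15 * (-q) ^ 3 - (3 / 2) * (-q) + C < 0 := by nlinarith
  have hfb : 0 < 15 * (-r) ^ 3 - (3 / 2) * (-r) + C := hpos (-r) le_rfl
  -- every root in [-q, q] lies in Ioo (-q) (-r)
  have hloc : ∀ t ∈ Set.Icc (-q) q, 15 * t ^ 3 - (3 / 2) * t + C = 0 →
      t ∈ Set.Ioo (-q) (-r) := by
    intro t ht heq
    obtain ⟨ht1, ht2⟩ := ht
    constructor
    · rcases lt_or_eq_of_le ht1 with h | h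
      · exact h
      · exfalso; rw [← h] at heq; linarith
    · by_contra h
      push_neg at h
      have := hpos t h
      linarith
  -- existence via IVT
  have hab : -q ≤ -r := by linarith
  have hcont : ContinuousOn (fun t : ℝ => 15 * t ^ 3 - (3 / 2) * t + C) (Set.Icc (-q) (-r)) :=
    (Continuous.continuousOn (by continuity))
  have hIVT := intermediate_value_Icc hab hcont
  have h0mem : (0:ℝ) ∈ Set.Icc (15 * (-q) ^ 3 - (3 / 2) * (-q) + C)
      (15 * (-r) ^ 3 - (3 / 2) * (-r) + C) := ⟨le_of_lt hfa, le_of_lt hfb⟩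
  obtain ⟨t₀, ht₀mem, ht₀eq'⟩ := hIVT h0mem
  have ht₀eq : 15 * t₀ ^ 3 - (3 / 2) * t₀ + C = 0 := ht₀eq'
  have ht₀Icc : t₀ ∈ Set.Icc (-q) q := ⟨ht₀mem.1, le_trans ht₀mem.2 (by linarith)⟩
  constructor
  · refine ⟨t₀, ⟨ht₀Icc, ht₀eq⟩, ?_⟩
    intro s ⟨hsIcc, hseq⟩
    have hs' := hloc s hsIcc hseq
    have ht' := hloc t₀ ht₀Icc ht₀eq
    by_contra hne
    rcases lt_or_gt_of_ne hne with h | h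
    · have := hmono s t₀ (le_of_lt hs'.1) h (le_of_lt ht'.2)
      rw [hseq, ht₀eq] at this; exact lt_irrefl 0 this
    · have := hmono t₀ s (le_of_lt ht'.1) h (le_of_lt hs'.2)
      rw [hseq, ht₀eq] at this; exact lt_irrefl 0 this
  · exact hloc
end

section
/- For every C ∈ (−1/√30, 1/√30), the cubic polynomial (10/9)t³ − (3/2)t + C has exactly one real root in the interval [−√(6/5), √(6/5)], and this root lies in the open interval (−3/(2√5), 3/(2√5)); moreover, for every C ∈ (1/√30, 3/√20) this polynomial has exactly two roots in [−√(6/5), √(6/5)]: one in (−3/(2√5), 3/(2√5)) and one in (3/(2√5), √(6/5)). -/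
/-!
The cubic `f(t) = (10/9)t³ - (3/2)t + C` has derivative `(10/3)(t² - b²)` with
`b = 3/(2√5)`, so it increases on `(-∞, -b]`, decreases on `[-b, b]` and increases on `[b, ∞)`.
Its values at the critical points are `C ± b`, and at the endpoints `±a`, `a = √(6/5)`, they are
`C ∓ a/6`, where `a/6 = 1/√30 < b`. The intermediate value theorem on each monotone piece,
together with the signs of these four values, locates every root of `f` in `[-a, a]`.
-/

open Set

namespace Stmt15

noncomputable def cubic (C t : ℝ) : ℝ := (10 / 9) * t ^ 3 - (3 / 2) * t + C

lemma continuous_cubic (C : ℝ) : Continuous (cubic C) := by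
  unfold cubic; fun_prop

lemma hasDerivAt_cubic (C t : ℝ) : HasDerivAt (cubic C) ((10 / 3) * t ^ 2 - 3 / 2) t := by
  have h := (((hasDerivAt_pow 3 t).const_mul ((10 : ℝ) / 9)).sub
    ((hasDerivAt_id t).const_mul ((3 : ℝ) / 2))).add_const C
  exact h.congr_deriv (by push_cast; ring)

lemma strictAntiOn_cubic {b : ℝ} (hb2 : b ^ 2 = 9 / 20) (C : ℝ) :
    StrictAntiOn (cubic C) (Icc (-b) b) := by
  refine strictAntiOn_of_deriv_neg (convex_Icc _ _) (continuous_cubic C).continuousOn ?_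
  intro t ht
  rw [interior_Icc] at ht
  rw [(hasDerivAt_cubic C t).deriv]
  nlinarith [ht.1, ht.2]

lemma strictMonoOn_cubic_Ici {b : ℝ} (hb2 : b ^ 2 = 9 / 20) (hb : 0 ≤ b) (C : ℝ) :
    StrictMonoOn (cubic C) (Ici b) := by
  refine strictMonoOn_of_deriv_pos (convex_Ici _) (continuous_cubic C).continuousOn ?_
  intro t ht
  rw [interior_Ici] at ht
  rw [(hasDerivAt_cubic C t).deriv]
  nlinarith [mem_Ioi.mp ht]

lemma strictMonoOn_cubic_Iic {b : ℝ} (hb2 : b ^ 2 = 9 / 20) (hb : 0 ≤ b) (C : ℝ) :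
    StrictMonoOn (cubic C) (Iic (-b)) := by
  refine strictMonoOn_of_deriv_pos (convex_Iic _) (continuous_cubic C).continuousOn ?_
  intro t ht
  rw [interior_Iic] at ht
  rw [(hasDerivAt_cubic C t).deriv]
  nlinarith [mem_Iio.mp ht]

lemma cubic_crit {b : ℝ} (hb2 : b ^ 2 = 9 / 20) (C : ℝ) : cubic C b = C - b := by
  unfold cubic; linear_combination (10 / 9 : ℝ) * b * hb2

lemma cubic_neg_crit {b : ℝ} (hb2 : b ^ 2 = 9 / 20) (C : ℝ) : cubic C (-b) = C + b := by
  unfold cubic; linear_combination (-10 / 9 : ℝ) * b * hb2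

lemma existsUnique_root_mem_Ioo_neg_crit_crit {b : ℝ} (hb2 : b ^ 2 = 9 / 20) {C : ℝ}
    (hC : C ∈ Ioo (-b) b) :
    ∃! t, t ∈ Ioo (-b) b ∧ cubic C t = 0 := by
  have hneg : cubic C b < 0 := by rw [cubic_crit hb2]; linarith [hC.2]
  have hpos : 0 < cubic C (-b) := by rw [cubic_neg_crit hb2]; linarith [hC.1]
  obtain ⟨t, ht, hroot⟩ := intermediate_value_Ioo' (by linarith [hC.1, hC.2])
    (continuous_cubic C).continuousOn
    (show (0 : ℝ) ∈ Ioo (cubic C b) (cubic C (-b)) from ⟨hneg, hpos⟩)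
  refine ⟨t, ⟨ht, hroot⟩, fun s ⟨hs, hsroot⟩ => ?_⟩
  exact (strictAntiOn_cubic hb2 C).injOn (Ioo_subset_Icc_self hs) (Ioo_subset_Icc_self ht)
    (hsroot.trans hroot.symm)

lemma cubic_endpoint {a : ℝ} (ha2 : a ^ 2 = 6 / 5) (C : ℝ) : cubic C a = C - a / 6 := by
  unfold cubic; linear_combination (10 / 9 : ℝ) * a * ha2

lemma cubic_neg_endpoint {a : ℝ} (ha2 : a ^ 2 = 6 / 5) (C : ℝ) : cubic C (-a) = C + a / 6 := by
  unfold cubic; linear_combination (-10 / 9 : ℝ) * a * ha2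

lemma existsUnique_root_mem_Ioo_crit_endpoint {a b : ℝ} (ha2 : a ^ 2 = 6 / 5)
    (hb2 : b ^ 2 = 9 / 20) (hb : 0 ≤ b) (hba : b < a) {C : ℝ} (hC : C ∈ Ioo (a / 6) b) :
    ∃! t, t ∈ Ioo b a ∧ cubic C t = 0 := by
  have hneg : cubic C b < 0 := by rw [cubic_crit hb2]; linarith [hC.2]
  have hpos : 0 < cubic C a := by rw [cubic_endpoint ha2]; linarith [hC.1]
  obtain ⟨t, ht, hroot⟩ := intermediate_value_Ioo hba.le (continuous_cubic C).continuousOn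
    (show (0 : ℝ) ∈ Ioo (cubic C b) (cubic C a) from ⟨hneg, hpos⟩)
  refine ⟨t, ⟨ht, hroot⟩, fun s ⟨hs, hsroot⟩ => ?_⟩
  exact (strictMonoOn_cubic_Ici hb2 hb C).injOn (mem_Ici.mpr hs.1.le) (mem_Ici.mpr ht.1.le)
    (hsroot.trans hroot.symm)

lemma neg_crit_lt_of_root {a b : ℝ} (ha2 : a ^ 2 = 6 / 5) (hb2 : b ^ 2 = 9 / 20) (hb : 0 ≤ b)
    (hba : b < a) {C t : ℝ} (hC : -(a / 6) < C) (ht : -a ≤ t) (hroot : cubic C t = 0) :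
    -b < t := by
  by_contra! htb
  have := (strictMonoOn_cubic_Iic hb2 hb C).monotoneOn (mem_Iic.mpr (by linarith)) htb ht
  rw [cubic_neg_endpoint ha2, hroot] at this
  linarith

lemma lt_crit_of_root {a b : ℝ} (ha2 : a ^ 2 = 6 / 5) (hb2 : b ^ 2 = 9 / 20) (hb : 0 ≤ b)
    {C t : ℝ} (hC : C < a / 6) (ht : t ≤ a) (hroot : cubic C t = 0) : t < b := by
  by_contra! hbt
  have := (strictMonoOn_cubic_Ici hb2 hb C).monotoneOn hbt (mem_Ici.mpr (hbt.trans ht)) ht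
  rw [cubic_endpoint ha2, hroot] at this
  linarith

lemma one_div_sqrt_thirty : 1 / Real.sqrt 30 = Real.sqrt (6 / 5) / 6 := by
  rw [div_eq_div_iff (by positivity) (by norm_num), one_mul, ← Real.sqrt_mul (by norm_num)]
  rw [show (6 / 5 * 30 : ℝ) = 6 ^ 2 by norm_num, Real.sqrt_sq (by norm_num)]

lemma three_div_sqrt_twenty : 3 / Real.sqrt 20 = 3 / (2 * Real.sqrt 5) := by
  rw [show (20 : ℝ) = 2 ^ 2 * 5 by norm_num, Real.sqrt_mul (by positivity),
    Real.sqrt_sq (by norm_num)]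

lemma sq_three_div_two_mul_sqrt_five : (3 / (2 * Real.sqrt 5)) ^ 2 = 9 / 20 := by
  rw [div_pow, mul_pow, Real.sq_sqrt (by norm_num)]; norm_num

end Stmt15

open Stmt15 in
/-- for `C ∈ (-1/√30, 1/√30)`, the cubic `(10/9)t³ - (3/2)t + C` has exactly one
root in `[-√(6/5), √(6/5)]`, lying in `(-3/(2√5), 3/(2√5))`; for `C ∈ (1/√30, 3/√20)` it has
exactly two roots in `[-√(6/5), √(6/5)]`: one in `(-3/(2√5), 3/(2√5))` and one in
`(3/(2√5), √(6/5))`. -/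
theorem stmt_15 :
    (∀ C ∈ Set.Ioo (-(1 / Real.sqrt 30)) (1 / Real.sqrt 30),
      (∃! t : ℝ, t ∈ Set.Icc (-Real.sqrt (6 / 5)) (Real.sqrt (6 / 5)) ∧
        (10 / 9) * t ^ 3 - (3 / 2) * t + C = 0) ∧
      (∀ t ∈ Set.Icc (-Real.sqrt (6 / 5)) (Real.sqrt (6 / 5)),
        (10 / 9) * t ^ 3 - (3 / 2) * t + C = 0 →
        t ∈ Set.Ioo (-(3 / (2 * Real.sqrt 5))) (3 / (2 * Real.sqrt 5)))) ∧
    (∀ C ∈ Set.Ioo (1 / Real.sqrt 30) (3 / Real.sqrt 20),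
      (∃! t : ℝ, t ∈ Set.Ioo (-(3 / (2 * Real.sqrt 5))) (3 / (2 * Real.sqrt 5)) ∧
        (10 / 9) * t ^ 3 - (3 / 2) * t + C = 0) ∧
      (∃! t : ℝ, t ∈ Set.Ioo (3 / (2 * Real.sqrt 5)) (Real.sqrt (6 / 5)) ∧
        (10 / 9) * t ^ 3 - (3 / 2) * t + C = 0) ∧
      (∀ t ∈ Set.Icc (-Real.sqrt (6 / 5)) (Real.sqrt (6 / 5)),
        (10 / 9) * t ^ 3 - (3 / 2) * t + C = 0 →
        t ∈ Set.Ioo (-(3 / (2 * Real.sqrt 5))) (3 / (2 * Real.sqrt 5)) ∪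
            Set.Ioo (3 / (2 * Real.sqrt 5)) (Real.sqrt (6 / 5)))) := by
  rw [one_div_sqrt_thirty, three_div_sqrt_twenty]
  set a := Real.sqrt (6 / 5)
  set b := 3 / (2 * Real.sqrt 5)
  have ha2 : a ^ 2 = 6 / 5 := Real.sq_sqrt (by norm_num)
  have hb2 : b ^ 2 = 9 / 20 := sq_three_div_two_mul_sqrt_five
  have ha : 0 < a := by positivity
  have hb : 0 < b := by positivity
  have hab : a / 6 < b := by nlinarith
  have hba : b < a := by nlinarith
  refine ⟨fun C hC => ?_, fun C hC => ?_⟩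
  · have hloc : ∀ t ∈ Icc (-a) a, cubic C t = 0 → t ∈ Ioo (-b) b := fun t ht hroot =>
      ⟨neg_crit_lt_of_root ha2 hb2 hb.le hba hC.1 ht.1 hroot,
        lt_crit_of_root ha2 hb2 hb.le hC.2 ht.2 hroot⟩
    obtain ⟨t, ⟨ht, hroot⟩, huniq⟩ := existsUnique_root_mem_Ioo_neg_crit_crit hb2
      (C := C) ⟨by linarith [hC.1], by linarith [hC.2]⟩
    exact ⟨⟨t, ⟨⟨by linarith [ht.1], by linarith [ht.2]⟩, hroot⟩,
      fun s hs => huniq s ⟨hloc s hs.1 hs.2, hs.2⟩⟩, hloc⟩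
  · refine ⟨existsUnique_root_mem_Ioo_neg_crit_crit hb2 ⟨by linarith [hC.1], hC.2⟩,
      existsUnique_root_mem_Ioo_crit_endpoint ha2 hb2 hb.le hba hC, fun t ht hroot => ?_⟩
    change cubic C t = 0 at hroot
    have hbt : -b < t := neg_crit_lt_of_root ha2 hb2 hb.le hba (by linarith [hC.1]) ht.1 hroot
    have htb : t ≠ b := by rintro rfl; rw [cubic_crit hb2] at hroot; linarith [hC.2]
    have hta : t ≠ a := by rintro rfl; rw [cubic_endpoint ha2] at hroot; linarith [hC.1]
    rcases htb.lt_or_gt with h | h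
    · exact Or.inl ⟨hbt, h⟩
    · exact Or.inr ⟨h, ht.2.lt_of_ne hta⟩
end
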